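/- (Gaussian integral of the Q-function) For every c > 0 and σ > 0, ∫_{−∞}^{∞} Q( c|x| ) · (1/(σ√(2π))) e^{−x²/(2σ²)} dx = (1/π)·arccot(c σ), where Q is the standard normal tail function; equivalently, if Z ~ N(0, σ²) then E[ Q(c|Z|) ] = (1/π)·arccot(cσ). -/

import Mathlib

open MeasureTheory ProbabilityTheory Real

/-- The standard normal tail function `Q(x) = (1/√(2π)) ∫_x^∞ e^{-t²/2} dt`. -/
noncomputable def Qtail (x : ℝ) : ℝ :=
  (Real.sqrt (2 * π))⁻¹ * ∫ t in Set.Ioi x, Real.exp (-t ^ 2 / 2)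

/-- The inverse cotangent taking values in `(0, π)`: `arccot x = π/2 - arctan x`. -/
noncomputable def arccot (x : ℝ) : ℝ := π / 2 - Real.arctan x

lemma aux_integral_Ioi_mul_exp {b : ℝ} (hb : 0 < b) :
    ∫ x in Set.Ioi (0:ℝ), x * Real.exp (-b * x ^ 2) = (2 * b)⁻¹ := by
  have hderiv : ∀ x ∈ Set.Ici (0:ℝ),
      HasDerivAt (fun x : ℝ => -(2*b)⁻¹ * Real.exp (-b * x ^ 2))
        (x * Real.exp (-b * x ^ 2)) x := by
    intro x _
    have h1 : HasDerivAt (fun x : ℝ => -b * x ^ 2) (-b * (2 * x)) x := by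
      simpa using ((hasDerivAt_pow 2 x).const_mul (-b))
    have h2 := (h1.exp).const_mul (-(2*b)⁻¹)
    convert h2 using 1
    · rfl
    · rfl
    field_simp [hb.ne']
  have hint : IntegrableOn (fun x : ℝ => x * Real.exp (-b * x ^ 2)) (Set.Ioi 0) :=
    (integrable_mul_exp_neg_mul_sq hb).integrableOn
  have htend : Filter.Tendsto (fun x : ℝ => -(2*b)⁻¹ * Real.exp (-b * x ^ 2))
      Filter.atTop (nhds 0) := by
    have : Filter.Tendsto (fun x : ℝ => -b * x ^ 2) Filter.atTop Filter.atBot := by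
      apply Filter.Tendsto.const_mul_atTop_of_neg (by linarith : -b < 0)
      exact Filter.tendsto_pow_atTop (by norm_num)
    simpa using (Real.tendsto_exp_atBot.comp this).const_mul (-(2*b)⁻¹)
  have := integral_Ioi_of_hasDerivAt_of_tendsto' hderiv hint htend
  rw [this]
  simp

lemma aux_integral_abs_mul_exp {b : ℝ} (hb : 0 < b) :
    ∫ x : ℝ, |x| * Real.exp (-b * x ^ 2) = b⁻¹ := by
  have h1 : ∫ x : ℝ, (fun y : ℝ => y * Real.exp (-b * y ^ 2)) |x|
      = 2 * ∫ x in Set.Ioi (0:ℝ), (fun y : ℝ => y * Real.exp (-b * y ^ 2)) x :=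
    integral_comp_abs (f := fun y : ℝ => y * Real.exp (-b * y ^ 2))
  simp only [sq_abs] at h1
  rw [h1, aux_integral_Ioi_mul_exp hb, mul_inv]
  field_simp

lemma exp_form : (fun t : ℝ => Real.exp (-t ^ 2 / 2)) = fun t => Real.exp (-(2⁻¹:ℝ) * t ^ 2) := by
  funext t; congr 1; ring

lemma integrable_gauss_half : Integrable (fun t : ℝ => Real.exp (-t ^ 2 / 2)) := by
  rw [exp_form]; exact integrable_exp_neg_mul_sq (by norm_num)

lemma integral_Ioi_zero_gauss : ∫ t in Set.Ioi (0:ℝ), Real.exp (-t ^ 2 / 2)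
    = Real.sqrt (2 * π) / 2 := by
  rw [exp_form]
  rw [integral_gaussian_Ioi]
  rw [show π / 2⁻¹ = 2 * π by ring]

lemma Qtail_eq {x : ℝ} (hx : 0 ≤ x) :
    Qtail x = 1/2 - (Real.sqrt (2*π))⁻¹ * ∫ t in (0:ℝ)..x, Real.exp (-t^2/2) := by
  have hsplit : (∫ t in Set.Ioc (0:ℝ) x, Real.exp (-t ^ 2 / 2))
      + (∫ t in Set.Ioi x, Real.exp (-t ^ 2 / 2)) = Real.sqrt (2 * π) / 2 := by
    rw [← integral_Ioi_zero_gauss, ← Set.Ioc_union_Ioi_eq_Ioi hx]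
    exact (setIntegral_union Set.Ioc_disjoint_Ioi_same measurableSet_Ioi
      integrable_gauss_half.integrableOn integrable_gauss_half.integrableOn).symm
  have hs : Real.sqrt (2 * π) ≠ 0 := by positivity
  rw [Qtail, intervalIntegral.integral_of_le hx]
  have : (∫ t in Set.Ioi x, Real.exp (-t ^ 2 / 2))
      = Real.sqrt (2 * π) / 2 - ∫ t in Set.Ioc (0:ℝ) x, Real.exp (-t ^ 2 / 2) := by
    linarith
  rw [this, mul_sub]
  congr 1
  rw [inv_mul_eq_div, div_right_comm, div_self hs]

lemma key {a : ℝ} (ha : 0 < a) :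
    ∫ u : ℝ, Qtail (a * |u|) * ((Real.sqrt (2*π))⁻¹ * Real.exp (-u^2/2))
      = 1/π * (π/2 - Real.arctan a) := by
  have hsq : (Real.sqrt (2*π))⁻¹ * (Real.sqrt (2*π))⁻¹ = (2*π)⁻¹ := by
    rw [← mul_inv, Real.mul_self_sqrt (by positivity)]
  -- pointwise rewriting
  have hpoint : ∀ u : ℝ, Qtail (a * |u|) * ((Real.sqrt (2*π))⁻¹ * Real.exp (-u^2/2))
      = 1/2 * ((Real.sqrt (2*π))⁻¹ * Real.exp (-u^2/2))
        - (2*π)⁻¹ * ∫ s in Set.Ioc (0:ℝ) a, |u| * Real.exp (-((1+s^2)/2) * u^2) := by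
    intro u
    rw [Qtail_eq (by positivity), sub_mul]
    congr 1
    -- substitution in the inner integral
    have hsub : (∫ t in (0:ℝ)..(a*|u|), Real.exp (-t^2/2))
        = ∫ s in (0:ℝ)..a, |u| * Real.exp (-(|u| * s) ^ 2 / 2) := by
      rcases eq_or_ne u 0 with rfl | hu
      · simp
      · have habs : |u| ≠ 0 := abs_ne_zero.mpr hu
        rw [intervalIntegral.integral_const_mul]
        have h := intervalIntegral.integral_comp_mul_left
          (f := fun t : ℝ => Real.exp (-t ^ 2 / 2)) (a := 0) (b := a) habs
        simp only [mul_zero, smul_eq_mul] at h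
        rw [h, ← mul_assoc, mul_inv_cancel₀ habs, one_mul, mul_comm a |u|]
    rw [hsub, intervalIntegral.integral_of_le ha.le]
    have hint1 : ∀ s : ℝ, |u| * Real.exp (-((1+s^2)/2) * u^2)
        = (|u| * Real.exp (-(|u| * s) ^ 2 / 2)) * Real.exp (-u^2/2) := by
      intro s
      rw [mul_assoc, ← Real.exp_add]
      congr 2
      rw [mul_pow, sq_abs]
      ring
    simp_rw [hint1]
    rw [integral_mul_const]
    set I := ∫ s in Set.Ioc (0:ℝ) a, |u| * Real.exp (-(|u| * s) ^ 2 / 2) with hI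
    rw [show (Real.sqrt (2*π))⁻¹ * I * ((Real.sqrt (2*π))⁻¹ * Real.exp (-u^2/2))
        = ((Real.sqrt (2*π))⁻¹ * (Real.sqrt (2*π))⁻¹) * (I * Real.exp (-u^2/2)) from by ring,
      hsq]
  rw [integral_congr_ae (Filter.Eventually.of_forall hpoint)]
  set ν := (volume : Measure ℝ).restrict (Set.Ioc (0:ℝ) a) with hν
  have hGint : Integrable (fun p : ℝ × ℝ => |p.1| * Real.exp (-(2⁻¹:ℝ) * p.1 ^ 2) * 1)
      ((volume : Measure ℝ).prod ν) := by
    refine Integrable.mul_prod (f := fun x : ℝ => |x| * Real.exp (-(2⁻¹:ℝ) * x ^ 2))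
      (g := fun _ : ℝ => (1:ℝ)) ?_ ?_
    · have h0 : Integrable (fun x : ℝ => |x * Real.exp (-(2⁻¹:ℝ) * x ^ 2)|) :=
        (integrable_mul_exp_neg_mul_sq (by norm_num : (0:ℝ) < 2⁻¹)).abs
      simpa [abs_mul, abs_of_pos (Real.exp_pos _)] using h0
    · exact (integrableOn_const measure_Ioc_lt_top.ne)
  have hf_cont : Continuous (fun p : ℝ × ℝ => |p.1| * Real.exp (-((1+p.2^2)/2) * p.1 ^ 2)) := by
    fun_prop
  have hH : Integrable
      (Function.uncurry (fun u s : ℝ => |u| * Real.exp (-((1+s^2)/2) * u ^ 2)))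
      ((volume : Measure ℝ).prod ν) := by
    refine hGint.mono' hf_cont.aestronglyMeasurable (Filter.Eventually.of_forall ?_)
    intro p
    have hle : Real.exp (-((1+p.2^2)/2) * p.1 ^ 2) ≤ Real.exp (-(2⁻¹:ℝ) * p.1 ^ 2) := by
      apply Real.exp_le_exp.2
      nlinarith [sq_nonneg p.2, sq_nonneg p.1, sq_nonneg (p.1 * p.2)]
    have hnn : (0:ℝ) ≤ |p.1| * Real.exp (-((1+p.2^2)/2) * p.1 ^ 2) := by positivity
    rw [Function.uncurry, Real.norm_eq_abs, abs_of_nonneg hnn, mul_one]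
    exact mul_le_mul_of_nonneg_left hle (abs_nonneg _)
  have hint1 : Integrable (fun u : ℝ => 1/2 * ((Real.sqrt (2*π))⁻¹ * Real.exp (-u^2/2))) :=
    (integrable_gauss_half.const_mul _).const_mul _
  have hint2 : Integrable
      (fun u : ℝ => ∫ s, |u| * Real.exp (-((1+s^2)/2) * u ^ 2) ∂ν) :=
    hH.integral_prod_left
  rw [integral_sub hint1 (hint2.const_mul _)]
  have e1 : ∫ u : ℝ, 1/2 * ((Real.sqrt (2*π))⁻¹ * Real.exp (-u^2/2)) = 1/2 := by
    rw [integral_const_mul, integral_const_mul, exp_form, integral_gaussian,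
      show π / 2⁻¹ = 2*π by ring,
      inv_mul_cancel₀ (by positivity : Real.sqrt (2*π) ≠ 0), mul_one]
  have hswap := integral_integral_swap hH
  have e2 : ∫ u : ℝ, ∫ s, |u| * Real.exp (-((1+s^2)/2) * u ^ 2) ∂ν
      = 2 * Real.arctan a := by
    rw [hswap]
    have einner : ∀ s : ℝ, (∫ u : ℝ, |u| * Real.exp (-((1+s^2)/2) * u ^ 2))
        = ((1+s^2)/2)⁻¹ := fun s =>
      aux_integral_abs_mul_exp (by positivity : (0:ℝ) < (1+s^2)/2)
    rw [integral_congr_ae (Filter.Eventually.of_forall (fun s => einner s))]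
    rw [hν, ← intervalIntegral.integral_of_le ha.le]
    have hform : ∀ s : ℝ, ((1+s^2)/2)⁻¹ = 2 * (1/(1+s^2)) := by
      intro s
      rw [eq_div_iff (by positivity)] at *
      ring_nf
      field_simp
    simp_rw [hform]
    rw [intervalIntegral.integral_const_mul, integral_one_div_one_add_sq,
      Real.arctan_zero, sub_zero]
  rw [e1, integral_const_mul, e2]
  have hpi : (π:ℝ) ≠ 0 := Real.pi_ne_zero
  field_simp


/-- **Gaussian integral of the Q-function.** For every `c > 0` and `σ > 0`,
`∫ Q(c|x|) (1/(σ√(2π))) e^{-x²/(2σ²)} dx = (1/π)·arccot(cσ)`; equivalently, if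
`Z ~ N(0, σ²)` then `E[Q(c|Z|)] = (1/π)·arccot(cσ)`. -/
theorem gaussian_integral_Qtail (c σ : ℝ) (hc : 0 < c) (hσ : 0 < σ) :
    (∫ x : ℝ, Qtail (c * |x|) *
        (1 / (σ * Real.sqrt (2 * π)) * Real.exp (-x ^ 2 / (2 * σ ^ 2)))) =
      1 / π * arccot (c * σ) ∧
    (∫ z, Qtail (c * |z|) ∂gaussianReal 0 (σ ^ 2).toNNReal) = 1 / π * arccot (c * σ) := by
  set g : ℝ → ℝ := fun x => Qtail (c * |x|) *
      (1 / (σ * Real.sqrt (2 * π)) * Real.exp (-x ^ 2 / (2 * σ ^ 2))) with hg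
  have hσ0 : σ ≠ 0 := hσ.ne'
  have h2 : ∀ x : ℝ, g (σ * x)
      = σ⁻¹ * (Qtail ((c * σ) * |x|) * ((Real.sqrt (2*π))⁻¹ * Real.exp (-x^2/2))) := by
    intro x
    rw [hg]
    simp only []
    rw [abs_mul, abs_of_pos hσ]
    rw [← mul_assoc]
    rw [show -(σ * x) ^ 2 / (2 * σ ^ 2) = -x ^ 2 / 2 by field_simp]
    rw [show 1 / (σ * Real.sqrt (2 * π)) = σ⁻¹ * (Real.sqrt (2 * π))⁻¹ by
      rw [one_div, mul_inv]]
    ring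
  have h1 := MeasureTheory.Measure.integral_comp_mul_left g σ
  rw [abs_inv, abs_of_pos hσ, smul_eq_mul] at h1
  rw [integral_congr_ae (Filter.Eventually.of_forall h2), integral_const_mul,
    key (by positivity : (0:ℝ) < c * σ)] at h1
  have hfirst : (∫ x : ℝ, g x) = 1 / π * arccot (c * σ) := by
    have hcancel := mul_left_cancel₀ (inv_ne_zero hσ0) h1
    rw [arccot]
    exact hcancel.symm
  refine ⟨hfirst, ?_⟩
  -- second conjunct
  set v : NNReal := (σ ^ 2).toNNReal with hv
  have hv0 : v ≠ 0 := by
    simp [hv, Real.toNNReal_eq_zero, not_le]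
    positivity
  have hvcoe : (v : ℝ) = σ ^ 2 := Real.coe_toNNReal _ (sq_nonneg σ)
  rw [gaussianReal_of_var_ne_zero _ hv0]
  have hpdf : gaussianPDF 0 v = fun x => ((gaussianPDFReal 0 v x).toNNReal : ENNReal) := by
    funext x; rfl
  rw [hpdf]
  rw [integral_withDensity_eq_integral_smul
    ((measurable_gaussianPDFReal 0 v).real_toNNReal) (fun z => Qtail (c * |z|))]
  have h3 : ∀ x : ℝ, (gaussianPDFReal 0 v x).toNNReal • Qtail (c * |x|) = g x := by
    intro x
    rw [NNReal.smul_def, Real.coe_toNNReal _ (gaussianPDFReal_nonneg 0 v x)]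
    rw [gaussianPDFReal, hg]
    simp only []
    rw [hvcoe]
    rw [show 2 * π * σ ^ 2 = (2 * π) * σ ^ 2 by ring,
      Real.sqrt_mul (by positivity) (σ ^ 2), Real.sqrt_sq hσ.le]
    rw [sub_zero]
    rw [smul_eq_mul, mul_inv]
    ring
  rw [integral_congr_ae (Filter.Eventually.of_forall h3)]
  exact hfirst
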